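/- The set E is a closed subset of C⁰(Ω̄) with respect to the supremum norm; that is, if u_n ∈ E for all n and u_n → u uniformly on Ω̄ for some u ∈ C⁰(Ω̄), then u ∈ E. -/
import Mathlib


open MeasureTheory ENNReal

/-- Membership in the set `E ⊂ C⁰(Ω̄)`: `u` is continuous and nonnegative on `Ω̄`,
with `∫_Ω u ≤ M₀`, `∫_Ω u^{-p} ≤ M₁` and `∫_Ω u^q ≤ M₂`, where `u^{-p}` is
interpreted as `∞` at zeros of `u`. -/
def memE {N : ℕ} (Ω : Set (EuclideanSpace ℝ (Fin N))) (p q M₀ M₁ M₂ : ℝ)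
    (u : EuclideanSpace ℝ (Fin N) → ℝ) : Prop :=
  ContinuousOn u (closure Ω) ∧ (∀ x ∈ closure Ω, 0 ≤ u x) ∧
    (∫⁻ x in Ω, ENNReal.ofReal (u x)) ≤ ENNReal.ofReal M₀ ∧
    (∫⁻ x in Ω, ENNReal.ofReal (u x) ^ (-p)) ≤ ENNReal.ofReal M₁ ∧
    (∫⁻ x in Ω, ENNReal.ofReal (u x) ^ q) ≤ ENNReal.ofReal M₂

theorem stmt_2 {N : ℕ} (Ω : Set (EuclideanSpace ℝ (Fin N)))
    (hΩne : Ω.Nonempty) (hΩopen : IsOpen Ω) (hΩbd : Bornology.IsBounded Ω)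
    (p q M₀ M₁ M₂ : ℝ) (hp : 0 < p) (hq : 1 ≤ q)
    (hM₀ : 0 < M₀) (hM₁ : 0 < M₁) (hM₂ : 0 < M₂)
    (u : ℕ → EuclideanSpace ℝ (Fin N) → ℝ) (v : EuclideanSpace ℝ (Fin N) → ℝ)
    (hu : ∀ n, memE Ω p q M₀ M₁ M₂ (u n))
    (hv : ContinuousOn v (closure Ω))
    (hconv : TendstoUniformlyOn u v Filter.atTop (closure Ω)) :
    memE Ω p q M₀ M₁ M₂ v := by
  have hΩm : MeasurableSet Ω := hΩopen.measurableSet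
  have hsub : Ω ⊆ closure Ω := subset_closure
  have hptv : ∀ x ∈ closure Ω,
      Filter.Tendsto (fun n => u n x) Filter.atTop (nhds (v x)) := fun x hx =>
    hconv.tendsto_at hx
  have hvnn : ∀ x ∈ closure Ω, 0 ≤ v x := fun x hx =>
    le_of_tendsto_of_tendsto' tendsto_const_nhds (hptv x hx) (fun n => (hu n).2.1 x hx)
  -- general Fatou-type step for a continuous transform Φ : ℝ≥0∞ → ℝ≥0∞
  have key : ∀ (Φ : ℝ≥0∞ → ℝ≥0∞) (hΦ : Continuous Φ) (M : ℝ),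
      (∀ n, (∫⁻ x in Ω, Φ (ENNReal.ofReal (u n x))) ≤ ENNReal.ofReal M) →
      (∫⁻ x in Ω, Φ (ENNReal.ofReal (v x))) ≤ ENNReal.ofReal M := by
    intro Φ hΦ M hbd
    have hmeas : ∀ n, AEMeasurable (fun x => Φ (ENNReal.ofReal (u n x)))
        (volume.restrict Ω) := fun n =>
      (hΦ.measurable.comp ENNReal.measurable_ofReal).comp_aemeasurable
        (((hu n).1.mono hsub).aemeasurable hΩm)
    calc (∫⁻ x in Ω, Φ (ENNReal.ofReal (v x)))
        = ∫⁻ x in Ω, Filter.liminf (fun n => Φ (ENNReal.ofReal (u n x))) Filter.atTop := by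
          refine lintegral_congr_ae ?_
          filter_upwards [ae_restrict_mem hΩm] with x hx
          have : Filter.Tendsto (fun n => Φ (ENNReal.ofReal (u n x))) Filter.atTop
              (nhds (Φ (ENNReal.ofReal (v x)))) :=
            ((hΦ.comp ENNReal.continuous_ofReal).tendsto _).comp (hptv x (hsub hx))
          exact this.liminf_eq.symm
      _ ≤ Filter.liminf (fun n => ∫⁻ x in Ω, Φ (ENNReal.ofReal (u n x))) Filter.atTop :=
          lintegral_liminf_le' hmeas
      _ ≤ ENNReal.ofReal M := by
          refine Filter.liminf_le_of_frequently_le' ?_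
          exact Filter.Frequently.of_forall hbd
  refine ⟨hv, hvnn, ?_, ?_, ?_⟩
  · simpa using key id continuous_id M₀ (fun n => by simpa using (hu n).2.2.1)
  · exact key (fun z => z ^ (-p)) ENNReal.continuous_rpow_const M₁ (fun n => (hu n).2.2.2.1)
  · exact key (fun z => z ^ q) ENNReal.continuous_rpow_const M₂ (fun n => (hu n).2.2.2.2)
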